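/- arXiv:2203.13415 — 4 statements merged into one kernel-verified Lean document; each statement's English description precedes it below -/
import Mathlib

section
/- Let n ∈ {4, 6, 8} and let G be a connected graph on n vertices. If the A_α-spectral radius with α = 1/2 satisfies ρ_{1/2}(G) > ρ_{1/2}(K_{(n−2)/2} ∨ \overline{K_{(n+2)/2}}), then G contains a perfect matching. -/
open scoped Classical

/-- The largest eigenvalue of a real square matrix. -/
noncomputable def maxEigenvalue {V : Type*} [Fintype V] (M : Matrix V V ℝ) : ℝ :=
  sSup {t : ℝ | Module.End.HasEigenvalue (Matrix.toLin' M) t}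

/-- The `A_α`-matrix `α•D(G) + (1-α)•A(G)` of a graph. -/
noncomputable def AalphaMatrix {V : Type*} [Fintype V] (α : ℝ) (G : SimpleGraph V) :
    Matrix V V ℝ :=
  α • Matrix.diagonal (fun v => (G.degree v : ℝ)) + (1 - α) • G.adjMatrix ℝ

/-- The `A_α`-spectral radius of a graph: the largest eigenvalue of its `A_α`-matrix. -/
noncomputable def rhoAlpha {V : Type*} [Fintype V] (α : ℝ) (G : SimpleGraph V) : ℝ :=
  maxEigenvalue (AalphaMatrix α G)

/-- The graph `K_m ∨ (K_{n-m})ᶜ` on `Fin n`: the first `m` vertices form a clique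
joined to everything and the remaining `n-m` vertices form an independent set. -/
def splitGraph (n m : ℕ) : SimpleGraph (Fin n) where
  Adj u v := u ≠ v ∧ ((u : ℕ) < m ∨ (v : ℕ) < m)
  symm := by
    constructor
    rintro u v ⟨h1, h2⟩
    exact ⟨h1.symm, by tauto⟩
  loopless := by
    constructor
    rintro u ⟨h, -⟩
    exact h rfl


/-!
Write `n = 2c + 2` and `m` for the number of edges of `G`. Testing `A_{1/2}(G)` against the
positive vector of degrees (Collatz–Wielandt) gives `ρ_{1/2}(G) ≤ m / (n - 1) + (n - 2) / 2` as
soon as `G` has no isolated vertex. The complete split graph `K_c ∨ (c + 2) K_1` has a positive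
eigenvector, `1` on the clique and `b` off it, so its `ρ_{1/2}` is the corresponding eigenvalue
`c + √(c (c + 1) / 2)`. Hence the hypothesis forces `m ≥ 4, 9, 18` for `n = 4, 6, 8`.

On the other hand, deleting the two ends of an edge at a vertex of minimum degree and comparing
degree sums shows, by induction through `4` and `6` vertices, that a graph on `n ≤ 8` vertices
without isolated vertices and without a perfect matching has at most `3, 9, 18` edges, and that
for `n = 6, 8` only the complete split graph attains the bound. Its spectral radius is exactly the
threshold, which the hypothesis excludes.
-/

open Finset
open scoped Matrix

lemma Finset.card_sdiff_pair {α : Type*} [DecidableEq α] {s : Finset α} {a b : α} (ha : a ∈ s)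
    (hb : b ∈ s) (hab : a ≠ b) : #(s \ {a, b}) = #s - 2 := by
  rw [card_sdiff_of_subset (insert_subset ha (singleton_subset_iff.mpr hb)), card_pair hab]

namespace SimpleGraph

variable {V : Type*} (G : SimpleGraph V)

noncomputable def degreeOn (S : Finset V) (v : V) : ℕ := #{w ∈ S | G.Adj v w}

/-- Twice the number of edges of `G` inside `S`. -/
noncomputable def degreeSumOn (S : Finset V) : ℕ := ∑ v ∈ S, G.degreeOn S v

def HasPerfectMatchingOn (S : Finset V) : Prop :=
  ∃ M : G.Subgraph, M.IsMatching ∧ M.verts = S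

/-- On `S = univ` with `#H = k` this says that `G` is `K_k ∨ \overline{K_{n-k}}`, with `H` the
clique. -/
def IsCompleteSplitOn (S H : Finset V) : Prop :=
  (∀ x ∈ H, ∀ y ∈ S, x ≠ y → G.Adj x y) ∧
    ∀ x ∈ S \ H, ∀ y ∈ S \ H, ¬ G.Adj x y

variable {G} {S : Finset V} {u v x : V}

lemma degreeOn_le_card (S : Finset V) (v : V) : G.degreeOn S v ≤ #S :=
  card_filter_le _ _

lemma degreeOn_lt_card (G : SimpleGraph V) (hv : v ∈ S) : G.degreeOn S v < #S :=
  card_lt_card <| filter_ssubset.mpr ⟨v, hv, G.irrefl⟩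

lemma exists_adj_of_degreeOn_pos (h : 0 < G.degreeOn S v) : ∃ w ∈ S, G.Adj v w := by
  obtain ⟨w, hw⟩ := card_pos.mp h
  exact ⟨w, (mem_filter.mp hw).1, (mem_filter.mp hw).2⟩

lemma adj_of_degreeOn_eq (hx : x ∈ S) (hd : G.degreeOn S x = #S - 1) {y : V} (hy : y ∈ S)
    (hxy : x ≠ y) : G.Adj x y := by
  have hsub : {w ∈ S | G.Adj x w} ⊆ S.erase x := fun w hw =>
    mem_erase.mpr ⟨(G.ne_of_adj (mem_filter.mp hw).2).symm, (mem_filter.mp hw).1⟩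
  have heq := eq_of_subset_of_card_le hsub (by rw [card_erase_of_mem hx]; exact hd.ge)
  have : y ∈ {w ∈ S | G.Adj x w} := heq ▸ mem_erase.mpr ⟨hxy.symm, hy⟩
  exact (mem_filter.mp this).2

lemma degreeOn_eq_degreeOn_sdiff_add (hu : u ∈ S) (hv : v ∈ S) (huv : u ≠ v) (x : V) :
    G.degreeOn S x = G.degreeOn (S \ {u, v}) x +
      ((if G.Adj x u then 1 else 0) + if G.Adj x v then 1 else 0) := by
  have hsub : ({u, v} : Finset V) ⊆ S := insert_subset hu (singleton_subset_iff.mpr hv)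
  simp only [degreeOn, card_filter]
  rw [← sdiff_union_of_subset hsub, sum_union sdiff_disjoint, sum_pair huv,
    sdiff_union_of_subset hsub]

lemma degreeSumOn_sdiff_pair (hu : u ∈ S) (hv : v ∈ S) (huv : G.Adj u v) :
    G.degreeSumOn (S \ {u, v}) + 2 * G.degreeOn S u + 2 * G.degreeOn S v =
      G.degreeSumOn S + 2 := by
  have hne := G.ne_of_adj huv
  have hsub : ({u, v} : Finset V) ⊆ S := insert_subset hu (singleton_subset_iff.mpr hv)
  have hsplit := degreeOn_eq_degreeOn_sdiff_add (G := G) hu hv hne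
  set T := S \ {u, v}
  have hcol (w : V) : ∑ x ∈ T, (if G.Adj x w then 1 else 0) = G.degreeOn T w := by
    simp only [degreeOn, card_filter, G.adj_comm]
  have hS : G.degreeSumOn S = ∑ x ∈ T, G.degreeOn S x + (G.degreeOn S u + G.degreeOn S v) := by
    rw [degreeSumOn, ← sdiff_union_of_subset hsub, sum_union sdiff_disjoint, sum_pair hne]
  have hT : ∑ x ∈ T, G.degreeOn S x = G.degreeSumOn T + G.degreeOn T u + G.degreeOn T v := by
    simp only [hsplit, sum_add_distrib, hcol, degreeSumOn, add_assoc]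
  have hu' := hsplit u
  have hv' := hsplit v
  simp only [G.irrefl, huv, huv.symm, if_true, if_false] at hu' hv'
  omega

lemma HasPerfectMatchingOn.of_sdiff_pair (hu : u ∈ S) (hv : v ∈ S) (huv : G.Adj u v)
    (h : G.HasPerfectMatchingOn (S \ {u, v})) : G.HasPerfectMatchingOn S := by
  obtain ⟨M, hM, hverts⟩ := h
  have hM' := Subgraph.IsMatching.subgraphOfAdj huv
  refine ⟨M ⊔ G.subgraphOfAdj huv, hM.sup hM' ?_, ?_⟩
  · rw [hM.support_eq_verts, hM'.support_eq_verts, hverts, subgraphOfAdj_verts]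
    simp [Set.disjoint_left]
  · rw [Subgraph.verts_sup, hverts, subgraphOfAdj_verts, coe_sdiff, coe_pair,
      Set.sdiff_union_of_subset (Set.insert_subset hu (Set.singleton_subset_iff.mpr hv))]

lemma hasPerfectMatchingOn_of_card_eq_two (hS : #S = 2) (hE : 0 < G.degreeSumOn S) :
    G.HasPerfectMatchingOn S := by
  obtain ⟨x, hx, hdx⟩ := exists_ne_zero_of_sum_ne_zero hE.ne'
  obtain ⟨y, hy, hxy⟩ := exists_adj_of_degreeOn_pos (Nat.pos_of_ne_zero hdx)
  refine .of_sdiff_pair hx hy hxy ⟨⊥, fun _ hv => by simp at hv, ?_⟩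
  have : #(S \ {x, y}) = 0 := by rw [card_sdiff_pair hx hy (G.ne_of_adj hxy), hS]
  simp [card_eq_zero.mp this]

lemma degreeSumOn_le_of_degreeOn_eq_zero (hu : u ∈ S) (h0 : G.degreeOn S u = 0) :
    G.degreeSumOn S ≤ (#S - 1) * (#S - 2) := by
  have hbound : ∀ x ∈ S.erase u, G.degreeOn S x ≤ #S - 2 := by
    intro x hx
    obtain ⟨hxu, hxS⟩ := mem_erase.mp hx
    have hnadj : ¬ G.Adj x u := fun h =>
      (card_pos.mpr ⟨x, mem_filter.mpr ⟨hxS, h.symm⟩⟩).ne' h0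
    have hsplit := degreeOn_eq_degreeOn_sdiff_add (G := G) hxS hu hxu x
    simp only [G.irrefl, hnadj, if_false] at hsplit
    exact hsplit ▸ card_sdiff_pair hxS hu hxu ▸ degreeOn_le_card _ _
  calc G.degreeSumOn S = G.degreeOn S u + ∑ x ∈ S.erase u, G.degreeOn S x :=
        (add_sum_erase S _ hu).symm
    _ ≤ 0 + #(S.erase u) * (#S - 2) := by
        rw [h0]
        simpa using sum_le_card_nsmul _ _ _ hbound
    _ = (#S - 1) * (#S - 2) := by rw [card_erase_of_mem hu, zero_add]

lemma degreeSumOn_eq_degreeOn_add_sum_add_sum (hu : u ∈ S) :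
    G.degreeSumOn S = G.degreeOn S u + ∑ x ∈ S with G.Adj u x, G.degreeOn S x +
      ∑ x ∈ S \ insert u {x ∈ S | G.Adj u x}, G.degreeOn S x := by
  have hsub : insert u {x ∈ S | G.Adj u x} ⊆ S := insert_subset hu (filter_subset _ _)
  rw [degreeSumOn, ← sum_sdiff hsub, sum_insert (by simp)]
  ring

lemma card_sdiff_insert_filter_adj (hu : u ∈ S) :
    #(S \ insert u {x ∈ S | G.Adj u x}) = #S - 1 - G.degreeOn S u := by
  rw [card_sdiff_of_subset (insert_subset hu (filter_subset _ _)),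
    card_insert_of_notMem (by simp), degreeOn]
  omega

lemma exists_adj_degreeSumOn_ge (hu : u ∈ S)
    (hmin : ∀ y ∈ S, G.degreeOn S u ≤ G.degreeOn S y) (hpos : 0 < G.degreeOn S u) :
    ∃ x ∈ S, G.Adj u x ∧ G.degreeOn S u + G.degreeOn S u * G.degreeOn S x +
      (#S - 1 - G.degreeOn S u) * G.degreeOn S u ≤ G.degreeSumOn S := by
  obtain ⟨x, hxN, hxmin⟩ :=
    exists_min_image {x ∈ S | G.Adj u x} (G.degreeOn S) (card_pos.mp hpos)
  obtain ⟨hxS, hux⟩ := mem_filter.mp hxN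
  refine ⟨x, hxS, hux, ?_⟩
  have hN : #{x ∈ S | G.Adj u x} * G.degreeOn S x ≤
      ∑ y ∈ S with G.Adj u y, G.degreeOn S y := by
    simpa using card_nsmul_le_sum _ (G.degreeOn S) _ hxmin
  have hR : #(S \ insert u {x ∈ S | G.Adj u x}) * G.degreeOn S u ≤
      ∑ y ∈ S \ insert u {x ∈ S | G.Adj u x}, G.degreeOn S y := by
    simpa using card_nsmul_le_sum _ (G.degreeOn S) _ fun y hy => hmin y (mem_sdiff.mp hy).1
  rw [card_sdiff_insert_filter_adj hu] at hR
  rw [degreeSumOn_eq_degreeOn_add_sum_add_sum hu]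
  exact add_le_add (add_le_add le_rfl hN) hR

lemma isCompleteSplitOn_of_degreeSumOn_le (hu : u ∈ S)
    (hmin : ∀ y ∈ S, G.degreeOn S u ≤ G.degreeOn S y)
    (hnbr : ∀ x ∈ S, G.Adj u x → G.degreeOn S x = #S - 1)
    (hE : G.degreeSumOn S ≤
      G.degreeOn S u + G.degreeOn S u * (#S - 1) + (#S - 1 - G.degreeOn S u) * G.degreeOn S u) :
    G.IsCompleteSplitOn S {x ∈ S | G.Adj u x} := by
  have hdecomp := degreeSumOn_eq_degreeOn_add_sum_add_sum (G := G) hu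
  have hcard := card_sdiff_insert_filter_adj (G := G) hu
  set N := {x ∈ S | G.Adj u x}
  set R := S \ insert u N
  have hN : ∑ x ∈ N, G.degreeOn S x = G.degreeOn S u * (#S - 1) := by
    rw [sum_congr rfl fun x hx => hnbr x (mem_filter.mp hx).1 (mem_filter.mp hx).2,
      sum_const, smul_eq_mul]
    rfl
  have hR : ∑ x ∈ R, G.degreeOn S u = ∑ x ∈ R, G.degreeOn S x := by
    refine le_antisymm (sum_le_sum fun y hy => hmin y (mem_sdiff.mp hy).1) ?_
    rw [sum_const, smul_eq_mul, hcard]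
    omega
  have hdR := (sum_eq_sum_iff_of_le fun y hy => hmin y (mem_sdiff.mp hy).1).mp hR
  have hfull : ∀ x ∈ N, ∀ y ∈ S, x ≠ y → G.Adj x y := fun x hx _ hy hxy =>
    adj_of_degreeOn_eq (mem_filter.mp hx).1 (hnbr x (mem_filter.mp hx).1 (mem_filter.mp hx).2)
      hy hxy
  have hnbrs : ∀ x ∈ S \ N, {y ∈ S | G.Adj x y} = N := by
    intro x hx
    obtain ⟨hxS, hxN⟩ := mem_sdiff.mp hx
    have hsub : N ⊆ {y ∈ S | G.Adj x y} := fun y hy =>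
      mem_filter.mpr ⟨(mem_filter.mp hy).1,
        (hfull y hy x hxS (by rintro rfl; exact hxN hy)).symm⟩
    refine (eq_of_subset_of_card_le hsub ?_).symm
    change G.degreeOn S x ≤ G.degreeOn S u
    by_cases hxu : x = u
    · rw [hxu]
    · exact (hdR x (mem_sdiff.mpr ⟨hxS, by simp [hxu, hxN]⟩)).ge
  refine ⟨hfull, fun x hx y hy hxy => (mem_sdiff.mp hy).2 ?_⟩
  rw [← hnbrs x hx]
  exact mem_filter.mpr ⟨(mem_sdiff.mp hy).1, hxy⟩

lemma degreeSumOn_lt_of_not_hasPerfectMatchingOn {k : ℕ} (hno : ¬ G.HasPerfectMatchingOn S)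
    (hu : u ∈ S) (hv : v ∈ S) (huv : G.Adj u v)
    (hk : k ≤ G.degreeSumOn (S \ {u, v}) → G.HasPerfectMatchingOn (S \ {u, v})) :
    G.degreeSumOn S + 2 < k + 2 * G.degreeOn S u + 2 * G.degreeOn S v := by
  have := degreeSumOn_sdiff_pair hu hv huv
  by_contra hlt
  exact hno (.of_sdiff_pair hu hv huv (hk (by omega)))

lemma adj_of_degreeOn_sdiff_pair_eq_zero (hu : u ∈ S) (hv : v ∈ S) (huv : u ≠ v) {z : V}
    (h0 : G.degreeOn (S \ {u, v}) z = 0) (h2 : 2 ≤ G.degreeOn S z) :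
    G.Adj z u ∧ G.degreeOn S z = 2 := by
  rw [degreeOn_eq_degreeOn_sdiff_add hu hv huv, h0] at h2 ⊢
  split_ifs at h2 ⊢ with hzu hzv <;> simp_all

lemma hasPerfectMatchingOn_of_card_eq_four (hS : #S = 4) (hE : 8 ≤ G.degreeSumOn S) :
    G.HasPerfectMatchingOn S := by
  by_contra hno
  obtain ⟨u, hu, hmin⟩ := exists_min_image S (G.degreeOn S) (card_pos.mp (by omega))
  have hpos : 0 < G.degreeOn S u := Nat.pos_of_ne_zero fun h0 => by
    have := degreeSumOn_le_of_degreeOn_eq_zero hu h0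
    rw [hS] at this
    omega
  obtain ⟨x, hx, hux, hsum⟩ := exists_adj_degreeSumOn_ge hu hmin hpos
  have hedge := degreeSumOn_lt_of_not_hasPerfectMatchingOn hno hu hx hux
    (hasPerfectMatchingOn_of_card_eq_two (by rw [card_sdiff_pair hu hx (G.ne_of_adj hux), hS]))
  have hxlt := G.degreeOn_lt_card hx
  have hult := G.degreeOn_lt_card hu
  have hux_le := hmin x hx
  rw [hS] at hsum hxlt hult
  interval_cases G.degreeOn S u <;> omega

lemma hasPerfectMatchingOn_of_card_eq_six (hS : #S = 6) (hE : 22 ≤ G.degreeSumOn S) :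
    G.HasPerfectMatchingOn S := by
  obtain ⟨u, hu, hmin⟩ := exists_min_image S (G.degreeOn S) (card_pos.mp (by omega))
  have hpos : 0 < G.degreeOn S u := Nat.pos_of_ne_zero fun h0 => by
    have := degreeSumOn_le_of_degreeOn_eq_zero hu h0
    rw [hS] at this
    omega
  obtain ⟨x, hx, hux, hsum⟩ := exists_adj_degreeSumOn_ge hu hmin hpos
  have hrem := degreeSumOn_sdiff_pair hu hx hux
  refine .of_sdiff_pair hu hx hux (hasPerfectMatchingOn_of_card_eq_four
    (by rw [card_sdiff_pair hu hx (G.ne_of_adj hux), hS]) ?_)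
  have hxlt := G.degreeOn_lt_card hx
  have hult := G.degreeOn_lt_card hu
  have hux_le := hmin x hx
  rw [hS] at hsum hxlt hult
  interval_cases G.degreeOn S u <;> omega

lemma exists_isCompleteSplitOn_of_card_eq_six (hS : #S = 6) (hδ : ∀ x ∈ S, 0 < G.degreeOn S x)
    (hE : 18 ≤ G.degreeSumOn S) (heven : Even (G.degreeSumOn S))
    (hno : ¬ G.HasPerfectMatchingOn S) :
    G.degreeSumOn S = 18 ∧ ∃ H, G.IsCompleteSplitOn S H ∧ #H = 2 := by
  obtain ⟨u, hu, hmin⟩ := exists_min_image S (G.degreeOn S) (card_pos.mp (by omega))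
  have hedge (x : V) (hx : x ∈ S) (hux : G.Adj u x) :
      G.degreeSumOn S + 2 < 8 + 2 * G.degreeOn S u + 2 * G.degreeOn S x :=
    degreeSumOn_lt_of_not_hasPerfectMatchingOn hno hu hx hux
      (hasPerfectMatchingOn_of_card_eq_four (by rw [card_sdiff_pair hu hx (G.ne_of_adj hux), hS]))
  obtain ⟨x, hx, hux, hsum⟩ := exists_adj_degreeSumOn_ge hu hmin (hδ u hu)
  have hx_edge := hedge x hx hux
  have hxlt := G.degreeOn_lt_card hx
  have hult := G.degreeOn_lt_card hu
  have hux_le := hmin x hx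
  obtain ⟨r, hr⟩ := heven
  rw [hS] at hsum hxlt hult
  have hδ2 : G.degreeOn S u = 2 ∧ G.degreeSumOn S = 18 := by
    interval_cases G.degreeOn S u <;> omega
  refine ⟨hδ2.2, _,
    isCompleteSplitOn_of_degreeSumOn_le hu hmin (fun y hy huy => ?_) ?_, hδ2.1⟩
  · have := hedge y hy huy
    have := G.degreeOn_lt_card hy
    omega
  · rw [hS, hδ2.1, hδ2.2]

lemma exists_isCompleteSplitOn_of_card_eq_eight (hS : #S = 8)
    (hδ : ∀ x ∈ S, 0 < G.degreeOn S x) (hE : 36 ≤ G.degreeSumOn S)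
    (heven : Even (G.degreeSumOn S)) (hno : ¬ G.HasPerfectMatchingOn S) :
    ∃ H, G.IsCompleteSplitOn S H ∧ #H = 3 := by
  obtain ⟨u, hu, hmin⟩ := exists_min_image S (G.degreeOn S) (card_pos.mp (by omega))
  obtain ⟨r, hr⟩ := heven
  have hcard (x : V) (hx : x ∈ S) (hux : G.Adj u x) : #(S \ {u, x}) = 6 := by
    rw [card_sdiff_pair hu hx (G.ne_of_adj hux), hS]
  have hedge₁ (x : V) (hx : x ∈ S) (hux : G.Adj u x) :
      G.degreeSumOn S + 2 < 22 + 2 * G.degreeOn S u + 2 * G.degreeOn S x :=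
    degreeSumOn_lt_of_not_hasPerfectMatchingOn hno hu hx hux
      (hasPerfectMatchingOn_of_card_eq_six (hcard x hx hux))
  obtain ⟨x, hx, hux, hsum⟩ := exists_adj_degreeSumOn_ge hu hmin (hδ u hu)
  have hxlt := G.degreeOn_lt_card hx
  have hux_le := hmin x hx
  have hδ2 : 2 ≤ G.degreeOn S u := by
    have := hedge₁ x hx hux
    omega
  have hedge₂ (y : V) (hy : y ∈ S) (huy : G.Adj u y) :
      G.degreeSumOn S + 2 ≤ 18 + 2 * G.degreeOn S u + 2 * G.degreeOn S y := by
    have hrem := degreeSumOn_sdiff_pair hu hy huy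
    -- a vertex isolated in `S \ {u, y}` would be a neighbour of `u` of degree `2`
    have hpos (z : V) (hz : z ∈ S \ {u, y}) : 0 < G.degreeOn (S \ {u, y}) z :=
      Nat.pos_of_ne_zero fun h0 => by
        have hzS := (mem_sdiff.mp hz).1
        have hz_ge := hmin z hzS
        obtain ⟨hzu, hz2⟩ := adj_of_degreeOn_sdiff_pair_eq_zero hu hy (G.ne_of_adj huy) h0
          (by omega)
        have := hedge₁ z hzS hzu.symm
        omega
    by_contra hlt
    have := (exists_isCompleteSplitOn_of_card_eq_six (hcard y hy huy) hpos (by omega)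
      ⟨r + 1 - G.degreeOn S u - G.degreeOn S y, by omega⟩
      fun h => hno (.of_sdiff_pair hu hy huy h)).1
    omega
  have hx_edge := hedge₂ x hx hux
  have hult := G.degreeOn_lt_card hu
  rw [hS] at hsum hxlt hult
  have hδ3 : G.degreeOn S u = 3 ∧ G.degreeSumOn S ≤ 36 := by
    interval_cases G.degreeOn S u <;> omega
  refine ⟨_, isCompleteSplitOn_of_degreeSumOn_le hu hmin (fun y hy huy => ?_) ?_, hδ3.1⟩
  · have := hedge₂ y hy huy
    have := G.degreeOn_lt_card hy
    omega
  · rw [hS, hδ3.1]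
    exact hδ3.2

variable [Fintype V] (G)

lemma degreeOn_univ (v : V) : G.degreeOn univ v = G.degree v := by
  rw [← G.card_neighborFinset_eq_degree, G.neighborFinset_eq_filter]
  rfl

lemma degreeSumOn_univ : G.degreeSumOn univ = 2 * #G.edgeFinset := by
  simp only [degreeSumOn, degreeOn_univ]
  exact G.sum_degrees_eq_twice_card_edges

variable {G}

lemma card_edgeFinset_le_of_card_eq_four (hV : Fintype.card V = 4)
    (hno : ¬ G.HasPerfectMatchingOn univ) : #G.edgeFinset ≤ 3 := by
  by_contra
  exact hno (hasPerfectMatchingOn_of_card_eq_four (by simpa using hV)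
    (by rw [degreeSumOn_univ]; omega))

lemma card_edgeFinset_le_or_exists_isCompleteSplitOn_of_card_eq_six
    (hV : Fintype.card V = 6) (hδ : ∀ v, 0 < G.degree v) (hno : ¬ G.HasPerfectMatchingOn univ) :
    #G.edgeFinset ≤ 8 ∨ ∃ H, G.IsCompleteSplitOn univ H ∧ #H = 2 := by
  have hE := G.degreeSumOn_univ
  refine or_iff_not_imp_left.mpr fun hm =>
    (exists_isCompleteSplitOn_of_card_eq_six (by simpa using hV) (fun v _ => ?_) (by omega)
      ⟨_, hE.trans (two_mul _)⟩ hno).2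
  exact G.degreeOn_univ v ▸ hδ v

lemma card_edgeFinset_le_or_exists_isCompleteSplitOn_of_card_eq_eight
    (hV : Fintype.card V = 8) (hδ : ∀ v, 0 < G.degree v) (hno : ¬ G.HasPerfectMatchingOn univ) :
    #G.edgeFinset ≤ 17 ∨ ∃ H, G.IsCompleteSplitOn univ H ∧ #H = 3 := by
  have hE := G.degreeSumOn_univ
  refine or_iff_not_imp_left.mpr fun hm =>
    exists_isCompleteSplitOn_of_card_eq_eight (by simpa using hV) (fun v _ => ?_) (by omega)
      ⟨_, hE.trans (two_mul _)⟩ hno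
  exact G.degreeOn_univ v ▸ hδ v

lemma HasPerfectMatchingOn.exists_isPerfectMatching (h : G.HasPerfectMatchingOn univ) :
    ∃ M : G.Subgraph, M.IsPerfectMatching := by
  obtain ⟨M, hM, hverts⟩ := h
  exact ⟨M, hM, fun v => by simp [hverts]⟩

end SimpleGraph

namespace Matrix

variable {ι : Type*} [Fintype ι] {M : Matrix ι ι ℝ} {x : ι → ℝ}

lemma le_of_hasEigenvalue_of_mulVec_le (hM : ∀ i j, 0 ≤ M i j) (hx : ∀ i, 0 < x i) {B : ℝ}
    (hMx : ∀ i, (M *ᵥ x) i ≤ B * x i) {μ : ℝ}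
    (hμ : Module.End.HasEigenvalue (toLin' M) μ) : μ ≤ B := by
  obtain ⟨y, hy⟩ := hμ.exists_hasEigenvector
  have hMy : M *ᵥ y = μ • y := by simpa [toLin'_apply] using hy.apply_eq_smul
  obtain ⟨j, hj⟩ : ∃ j, y j ≠ 0 := Function.ne_iff.mp hy.2
  obtain ⟨i, -, hi⟩ := exists_max_image univ (fun k => |y k| / x k) ⟨j, mem_univ j⟩
  set c := |y i| / x i
  have hy_le (k : ι) : |y k| ≤ c * x k := (div_le_iff₀ (hx k)).mp (hi k (mem_univ k))
  have hyi : |y i| = c * x i := (div_mul_cancel₀ _ (hx i).ne').symm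
  have hc : 0 < c := (div_pos (abs_pos.mpr hj) (hx j)).trans_le (hi j (mem_univ j))
  have key : |μ| * |y i| ≤ B * |y i| :=
    calc |μ| * |y i| = |∑ k, M i k * y k| := by
          rw [← abs_mul, ← smul_eq_mul, ← Pi.smul_apply, ← hMy, mulVec, dotProduct]
      _ ≤ ∑ k, M i k * |y k| := by
          refine (abs_sum_le_sum_abs _ _).trans_eq (sum_congr rfl fun k _ => ?_)
          rw [abs_mul, abs_of_nonneg (hM i k)]
      _ ≤ ∑ k, M i k * (c * x k) :=
          sum_le_sum fun k _ => mul_le_mul_of_nonneg_left (hy_le k) (hM i k)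
      _ = c * (M *ᵥ x) i := by
          simp only [mulVec, dotProduct, mul_sum]
          exact sum_congr rfl fun k _ => by ring
      _ ≤ c * (B * x i) := mul_le_mul_of_nonneg_left (hMx i) hc.le
      _ = B * |y i| := by rw [hyi]; ring
  exact (le_abs_self μ).trans (le_of_mul_le_mul_right key (hyi ▸ mul_pos hc (hx i)))

/-- `0 ≤ B` is needed because `maxEigenvalue` is the junk value `sSup ∅ = 0` when there are no
real eigenvalues. -/
lemma maxEigenvalue_le_of_mulVec_le (hM : ∀ i j, 0 ≤ M i j) (hx : ∀ i, 0 < x i) {B : ℝ}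
    (hMx : ∀ i, (M *ᵥ x) i ≤ B * x i) (hB : 0 ≤ B) : maxEigenvalue M ≤ B :=
  Real.sSup_le (fun _ hμ => le_of_hasEigenvalue_of_mulVec_le hM hx hMx hμ) hB

lemma maxEigenvalue_eq_of_mulVec_eq_smul [Nonempty ι] (hM : ∀ i j, 0 ≤ M i j)
    (hx : ∀ i, 0 < x i) {t : ℝ} (hMx : M *ᵥ x = t • x) : maxEigenvalue M = t := by
  have hx0 : x ≠ 0 := fun h => (hx (Classical.arbitrary ι)).ne' (congrFun h _)
  refine IsGreatest.csSup_eq ⟨Module.End.hasEigenvalue_of_hasEigenvector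
    ⟨Module.End.mem_eigenspace_iff.mpr (by rw [toLin'_apply, hMx]), hx0⟩, fun μ hμ => ?_⟩
  exact le_of_hasEigenvalue_of_mulVec_le hM hx (fun i => by simp [hMx]) hμ

end Matrix

section Aalpha

variable {V : Type*} [Fintype V] (G : SimpleGraph V)

lemma AalphaMatrix_nonneg {α : ℝ} (h0 : 0 ≤ α) (h1 : α ≤ 1) (i j : V) :
    0 ≤ AalphaMatrix α G i j := by
  unfold AalphaMatrix
  simp only [Matrix.add_apply, Matrix.smul_apply, Matrix.diagonal_apply,
    SimpleGraph.adjMatrix_apply, smul_eq_mul]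
  have : 0 ≤ 1 - α := by linarith
  split_ifs <;> positivity

lemma AalphaMatrix_mulVec_apply (α : ℝ) (x : V → ℝ) (i : V) :
    (AalphaMatrix α G *ᵥ x) i =
      α * (G.degree i * x i) + (1 - α) * ∑ j ∈ G.neighborFinset i, x j := by
  simp [AalphaMatrix, Matrix.add_mulVec, Matrix.smul_mulVec, Matrix.mulVec_diagonal,
    SimpleGraph.adjMatrix_mulVec_apply]

variable {G}

lemma SimpleGraph.sum_degree_neighborFinset_add_le (hδ : ∀ v, 0 < G.degree v) (i : V) :
    ∑ j ∈ G.neighborFinset i, G.degree j + (Fintype.card V - 1) ≤ 2 * #G.edgeFinset := by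
  rw [← G.sum_degrees_eq_twice_card_edges, ← sum_add_sum_compl (G.neighborFinset i)]
  have hi : i ∈ (G.neighborFinset i)ᶜ := by simp
  have hcard : #((G.neighborFinset i)ᶜ.erase i) = Fintype.card V - 1 - G.degree i := by
    rw [card_erase_of_mem hi, card_compl, G.card_neighborFinset_eq_degree]
    omega
  have hsum : #((G.neighborFinset i)ᶜ.erase i) ≤
      ∑ j ∈ (G.neighborFinset i)ᶜ.erase i, G.degree j := by
    simpa using card_nsmul_le_sum ((G.neighborFinset i)ᶜ.erase i) (fun j => G.degree j) 1
      fun j _ => hδ j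
  rw [← add_sum_erase _ _ hi]
  have := G.degree_lt_card_verts i
  omega

lemma SimpleGraph.mul_degree_mul_degree_add_sum_le (hδ : ∀ v, 0 < G.degree v) (i : V) :
    (Fintype.card V - 1 : ℝ) *
        (G.degree i * G.degree i + ∑ j ∈ G.neighborFinset i, (G.degree j : ℝ)) ≤
      (2 * #G.edgeFinset + (Fintype.card V - 1 : ℝ) * (Fintype.card V - 2)) * G.degree i := by
  set N : ℝ := Fintype.card V - 1
  set m : ℝ := (#G.edgeFinset : ℝ)
  set d : ℝ := (G.degree i : ℝ)
  set s : ℝ := ∑ j ∈ G.neighborFinset i, (G.degree j : ℝ)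
  have hdeg (j : V) : (G.degree j : ℝ) ≤ N := by
    rw [le_sub_iff_add_le]
    exact_mod_cast G.degree_lt_card_verts j
  have hd : 0 ≤ d := Nat.cast_nonneg _
  have hN : 0 ≤ N := (Nat.cast_nonneg _).trans (hdeg i)
  have hs₁ : s ≤ d * N := by
    have := sum_le_card_nsmul (G.neighborFinset i) (fun j => (G.degree j : ℝ)) N fun j _ => hdeg j
    rwa [G.card_neighborFinset_eq_degree, nsmul_eq_mul] at this
  have hs₂ : s + N ≤ 2 * m := by
    have hcard : ((Fintype.card V - 1 : ℕ) : ℝ) = N := by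
      rw [Nat.cast_sub (Fintype.card_pos_iff.mpr ⟨i⟩), Nat.cast_one]
    have := G.sum_degree_neighborFinset_add_le hδ i
    rw [← hcard]
    simp only [s, m]
    exact_mod_cast this
  rw [show (Fintype.card V - 2 : ℝ) = N - 1 by ring]
  -- `s ≤ d N` is the better bound when `d N ≤ 2m - N`, and `s ≤ 2m - N` otherwise
  rcases le_or_gt (d * N) (2 * m - N) with h | h
  · nlinarith [mul_le_mul_of_nonneg_left h hd]
  · nlinarith [mul_nonneg (sub_nonneg.mpr h.le) (sub_nonneg.mpr (hdeg i))]

lemma rhoAlpha_half_le_of_degree_pos [Nonempty V] (hδ : ∀ v, 0 < G.degree v) :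
    rhoAlpha (1/2) G ≤
      #G.edgeFinset / (Fintype.card V - 1 : ℝ) + (Fintype.card V - 2 : ℝ) / 2 := by
  obtain ⟨v⟩ := ‹Nonempty V›
  have hn : (2 : ℝ) ≤ Fintype.card V := by
    have := hδ v
    have := G.degree_lt_card_verts v
    exact_mod_cast (by omega : 2 ≤ Fintype.card V)
  refine Matrix.maxEigenvalue_le_of_mulVec_le (AalphaMatrix_nonneg G (by norm_num) (by norm_num))
    (x := fun j => (G.degree j : ℝ)) (fun j => by exact_mod_cast hδ j) (fun i => ?_)
    (add_nonneg (div_nonneg (Nat.cast_nonneg _) (by linarith)) (by linarith))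
  have hrhs : (#G.edgeFinset / (Fintype.card V - 1 : ℝ) + (Fintype.card V - 2 : ℝ) / 2) *
      G.degree i = (2 * #G.edgeFinset + (Fintype.card V - 1 : ℝ) * (Fintype.card V - 2)) *
        G.degree i / (2 * (Fintype.card V - 1)) := by
    have : (Fintype.card V - 1 : ℝ) ≠ 0 := by linarith
    field_simp
  rw [AalphaMatrix_mulVec_apply, hrhs, le_div_iff₀ (by linarith)]
  linarith [G.mul_degree_mul_degree_add_sum_le hδ i]

end Aalpha

section CompleteSplit

variable {V : Type*} [Fintype V] {G : SimpleGraph V} {H : Finset V}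

lemma SimpleGraph.IsCompleteSplitOn.neighborFinset_of_mem (hG : G.IsCompleteSplitOn univ H)
    {x : V} (hx : x ∈ H) : G.neighborFinset x = univ.erase x := by
  ext y
  simp only [mem_neighborFinset, mem_erase, mem_univ, and_true]
  exact ⟨fun h => (G.ne_of_adj h).symm, fun h => hG.1 x hx y (mem_univ y) (Ne.symm h)⟩

lemma SimpleGraph.IsCompleteSplitOn.neighborFinset_of_notMem (hG : G.IsCompleteSplitOn univ H)
    {x : V} (hx : x ∉ H) : G.neighborFinset x = H := by
  ext y
  rw [mem_neighborFinset]
  refine ⟨fun h => ?_, fun hy => (hG.1 y hy x (mem_univ x) (by rintro rfl; exact hx hy)).symm⟩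
  by_contra hy
  exact hG.2 x (by simp [hx]) y (by simp [hy]) h

/-- The eigenvector is `1` on `H` and `b = (2s - c) / (c + 2)` off `H`, where `c = #H` and
`s = √(c (c + 1) / 2)`; the row equations at `H` and off `H` both reduce to
`s ^ 2 = c (c + 1) / 2`. -/
lemma rhoAlpha_half_eq_of_isCompleteSplitOn (hG : G.IsCompleteSplitOn univ H)
    (hV : Fintype.card V = 2 * #H + 2) (hH : H.Nonempty) :
    rhoAlpha (1/2) G = #H + √(#H * (#H + 1) / 2) := by
  set c : ℝ := (#H : ℝ)
  set s := √(c * (c + 1) / 2)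
  have hc : 1 ≤ c := Nat.one_le_cast.mpr hH.card_pos
  have hs : s ^ 2 = c * (c + 1) / 2 := Real.sq_sqrt (by positivity)
  have hs0 : 0 ≤ s := Real.sqrt_nonneg _
  have h2s : c < 2 * s := by nlinarith
  set b := (2 * s - c) / (c + 2)
  have hb : 0 < b := div_pos (by linarith) (by linarith)
  have hbc : (c + 2) * b = 2 * s - c := by
    simp only [b]
    field_simp
  set w : V → ℝ := fun i => if i ∈ H then 1 else b
  have hw (i : V) : 0 < w i := by
    simp only [w]
    split_ifs
    exacts [one_pos, hb]
  have hsumH : ∑ j ∈ H, w j = c := by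
    simp only [w]
    rw [sum_congr rfl fun j hj => if_pos hj, sum_const, nsmul_one]
  have hsum : ∑ j, w j = c + (c + 2) * b := by
    rw [← sum_add_sum_compl H, hsumH, sum_congr rfl fun j hj => if_neg (mem_compl.mp hj),
      sum_const, card_compl, hV, show 2 * #H + 2 - #H = #H + 2 by omega, nsmul_eq_mul]
    push_cast
    ring
  have : Nonempty V := ⟨hH.choose⟩
  refine Matrix.maxEigenvalue_eq_of_mulVec_eq_smul
    (AalphaMatrix_nonneg G (by norm_num) (by norm_num)) hw (funext fun i => ?_)
  rw [AalphaMatrix_mulVec_apply, Pi.smul_apply, smul_eq_mul, ← G.card_neighborFinset_eq_degree]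
  by_cases hi : i ∈ H
  · rw [hG.neighborFinset_of_mem hi, card_erase_of_mem (mem_univ _), card_univ, hV,
      sum_erase_eq_sub (mem_univ _), hsum]
    simp only [w, if_pos hi]
    push_cast
    linarith
  · rw [hG.neighborFinset_of_notMem hi, hsumH]
    simp only [w, if_neg hi]
    nlinarith

lemma splitGraph_isCompleteSplitOn (n c : ℕ) :
    (splitGraph n c).IsCompleteSplitOn univ {i | (i : ℕ) < c} := by
  refine ⟨fun x hx y _ hxy => ⟨hxy, .inl (mem_filter.mp hx).2⟩, fun x hx y hy hxy => ?_⟩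
  simp only [mem_sdiff, mem_filter, mem_univ, true_and] at hx hy
  exact hxy.2.elim hx hy

lemma rhoAlpha_half_splitGraph {c : ℕ} (hc : 0 < c) :
    rhoAlpha (1/2) (splitGraph (2 * c + 2) c) = c + √(c * (c + 1) / 2) := by
  have hcard : #{i : Fin (2 * c + 2) | (i : ℕ) < c} = c := by
    rw [Fin.card_filter_val_lt]
    omega
  rw [rhoAlpha_half_eq_of_isCompleteSplitOn (splitGraph_isCompleteSplitOn _ _) (by simp [hcard])
    (card_pos.mp (by omega)), hcard]

lemma rhoAlpha_half_le_of_two_mul_sq_le {c : ℕ} (hV : Fintype.card V = 2 * c + 2)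
    (hδ : ∀ v, 0 < G.degree v) (hm : 2 * #G.edgeFinset ^ 2 ≤ (2 * c + 1) ^ 2 * (c * (c + 1))) :
    rhoAlpha (1/2) G ≤ c + √(c * (c + 1) / 2) := by
  have : Nonempty V := Fintype.card_pos_iff.mp (by rw [hV]; omega)
  refine (rhoAlpha_half_le_of_degree_pos hδ).trans ?_
  rw [hV, add_comm (c : ℝ)]
  push_cast
  rw [show (2 * c + 2 : ℝ) - 1 = 2 * c + 1 by ring, show ((2 * c + 2 : ℝ) - 2) / 2 = c by ring]
  gcongr
  refine Real.le_sqrt_of_sq_le ?_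
  rw [div_pow, div_le_iff₀ (by positivity)]
  have : (2 * #G.edgeFinset ^ 2 : ℝ) ≤ (2 * c + 1) ^ 2 * (c * (c + 1)) := by exact_mod_cast hm
  linarith

end CompleteSplit

theorem stmt_12 (n : ℕ) (hn : n = 4 ∨ n = 6 ∨ n = 8)
    (G : SimpleGraph (Fin n)) (hG : G.Connected)
    (h : rhoAlpha (1/2) (splitGraph n ((n - 2) / 2)) < rhoAlpha (1/2) G) :
    ∃ M : G.Subgraph, M.IsPerfectMatching := by
  obtain ⟨c, rfl, hc⟩ : ∃ c, n = 2 * c + 2 ∧ (c = 1 ∨ c = 2 ∨ c = 3) :=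
    ⟨(n - 2) / 2, by omega, by omega⟩
  rw [show (2 * c + 2 - 2) / 2 = c by omega, rhoAlpha_half_splitGraph (by omega)] at h
  have hV : Fintype.card (Fin (2 * c + 2)) = 2 * c + 2 := Fintype.card_fin _
  have hδ (v : Fin (2 * c + 2)) : 0 < G.degree v := hG.preconnected.degree_pos_of_nontrivial v
  by_contra hno
  have hnoM : ¬ G.HasPerfectMatchingOn univ := fun hM => hno hM.exists_isPerfectMatching
  -- the first alternative is `m / (n - 1) ≤ √(c (c + 1) / 2)`, squared
  suffices 2 * #G.edgeFinset ^ 2 ≤ (2 * c + 1) ^ 2 * (c * (c + 1)) ∨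
      ∃ H, G.IsCompleteSplitOn univ H ∧ #H = c by
    rcases this with hm | ⟨H, hH, hHc⟩
    · exact (rhoAlpha_half_le_of_two_mul_sq_le hV hδ hm).not_gt h
    · refine h.ne' ?_
      rw [rhoAlpha_half_eq_of_isCompleteSplitOn hH (by rw [hV, hHc]) (card_pos.mp (by omega)), hHc]
  rcases hc with rfl | rfl | rfl
  · exact .inl (by nlinarith [G.card_edgeFinset_le_of_card_eq_four hV hnoM])
  · exact (G.card_edgeFinset_le_or_exists_isCompleteSplitOn_of_card_eq_six hV hδ hnoM).imp_left
      fun hm => by nlinarith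
  · exact (G.card_edgeFinset_le_or_exists_isCompleteSplitOn_of_card_eq_eight hV hδ hnoM).imp_left
      fun hm => by nlinarith
end

section
/- Let n, s, k be positive integers with k ≥ 2, s ≥ 1, n ≡ k (mod 2), and n + 1 − 2s − k ≥ 1. Then the matching number of the graph K_s ∨ (K_{n+1−2s−k} ∪ \overline{K_{s+k−1}}) (which has n vertices) is at most (n−k)/2. -/
/-!
Every neighbour of a vertex in the independent set (the last `s + k - 1` vertices) lies in `K_s`,
so a matching covers at most `s` vertices of that set, and hence at most
`s + (n + 1 - s - k) = n + 1 - k` vertices in all. A matching covers exactly twice as many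
vertices as it has edges, and `n - k` is even, so it has at most `(n - k) / 2` edges.
-/

open scoped Classical

/-- The matching number of a graph: the maximum number of pairwise disjoint edges. -/
noncomputable def matchingNumber {V : Type*} [Fintype V] (G : SimpleGraph V) : ℕ :=
  sSup {m : ℕ | ∃ M : G.Subgraph, M.IsMatching ∧ M.edgeSet.ncard = m}

/-- The graph `K_s ∨ (K_{n+1-2s-k} ∪ (K_{s+k-1})ᶜ)` on `Fin n`: the first `s`
vertices form a clique joined to everything, the vertices with index in
`[s, n+1-s-k)` form a clique of size `n+1-2s-k`, and the remaining `s+k-1`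
vertices form an independent set. -/
def cliqueJoinGraph (n s k : ℕ) : SimpleGraph (Fin n) where
  Adj u v := u ≠ v ∧ ((u : ℕ) < s ∨ (v : ℕ) < s ∨
    ((u : ℕ) < n + 1 - s - k ∧ (v : ℕ) < n + 1 - s - k))
  symm := by
    constructor
    rintro u v ⟨h1, h2⟩
    exact ⟨h1.symm, by tauto⟩
  loopless := by
    constructor
    rintro u ⟨h, -⟩
    exact h rfl
namespace SimpleGraph.Subgraph.IsMatching

variable {V : Type*} [Finite V] {G : SimpleGraph V} {M : G.Subgraph}

theorem ncard_verts_eq_two_mul_ncard_edgeSet (h : M.IsMatching) :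
    M.verts.ncard = 2 * M.edgeSet.ncard := by
  have : Fintype M.edgeSet := Fintype.ofFinite _
  have hfiber : ∀ e : M.edgeSet, Nat.card {v // h.toEdge v = e} = 2 := by
    rintro ⟨e, he⟩
    induction e using Sym2.ind with
    | _ u w =>
      change Nat.card (h.toEdge ⁻¹' {⟨s(u, w), he⟩}) = 2
      rw [h.toEdge_preimage_singleton he, Nat.card_coe_set_eq,
        Set.ncard_pair (Subtype.coe_ne_coe.mp (M.adj_sub he).ne)]
  rw [← Nat.card_coe_set_eq, ← Nat.card_congr (Equiv.sigmaFiberEquiv h.toEdge), Nat.card_sigma,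
    Finset.sum_congr rfl fun e _ => hfiber e, Finset.sum_const, smul_eq_mul, Finset.card_univ,
    ← Nat.card_eq_fintype_card, Nat.card_coe_set_eq, mul_comm]

theorem ncard_verts_inter_le {A B : Set V} (h : M.IsMatching)
    (hAB : ∀ u ∈ A, ∀ v, M.Adj u v → v ∈ B) : (M.verts ∩ A).ncard ≤ B.ncard := by
  let partner : V → V := fun u => if hu : u ∈ M.verts then (h hu).choose else u
  have adj_partner : ∀ u (hu : u ∈ M.verts), M.Adj u (partner u) := fun u hu => by
    simpa only [partner, dif_pos hu] using (h hu).choose_spec.1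
  refine Set.ncard_le_ncard_of_injOn partner
    (fun u ⟨hu, huA⟩ => hAB u huA _ (adj_partner u hu)) ?_ (Set.toFinite B)
  intro u₁ ⟨hu₁, _⟩ u₂ ⟨hu₂, _⟩ heq
  exact h.eq_of_adj_right (adj_partner u₁ hu₁) (heq ▸ adj_partner u₂ hu₂)

theorem ncard_verts_le {A B : Set V} (h : M.IsMatching)
    (hAB : ∀ u ∈ A, ∀ v, M.Adj u v → v ∈ B) : M.verts.ncard ≤ B.ncard + Aᶜ.ncard := calc
  M.verts.ncard ≤ ((M.verts ∩ A) ∪ Aᶜ).ncard :=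
    Set.ncard_le_ncard (fun v hv => (em (v ∈ A)).imp (fun hA => ⟨hv, hA⟩) id)
  _ ≤ (M.verts ∩ A).ncard + Aᶜ.ncard := Set.ncard_union_le _ _
  _ ≤ B.ncard + Aᶜ.ncard := Nat.add_le_add_right (h.ncard_verts_inter_le hAB) _

end SimpleGraph.Subgraph.IsMatching

theorem matchingNumber_le {V : Type*} [Fintype V] {G : SimpleGraph V} {m : ℕ}
    (h : ∀ M : G.Subgraph, M.IsMatching → M.edgeSet.ncard ≤ m) : matchingNumber G ≤ m :=
  csSup_le' fun _ ⟨M, hM, hm⟩ => hm ▸ h M hM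

theorem Fin.ncard_setOf_val_lt_le (n t : ℕ) : {v : Fin n | (v : ℕ) < t}.ncard ≤ t := by
  simpa using Set.ncard_le_ncard_of_injOn (s := {v : Fin n | (v : ℕ) < t}) Fin.val
    (t := Set.Iio t) (fun _ hv => hv) Fin.val_injective.injOn

theorem cliqueJoinGraph_adj_lt {n s k : ℕ} (hs : s ≤ n + 1 - s - k) {u v : Fin n}
    (hu : n + 1 - s - k ≤ u) (huv : (cliqueJoinGraph n s k).Adj u v) : (v : ℕ) < s := by
  obtain ⟨-, h | h | h⟩ := huv <;> omega

theorem stmt_13_general (n s k : ℕ) (hmod : n % 2 = k % 2)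
    (hns : 2 * s + k ≤ n) :
    (matchingNumber (cliqueJoinGraph n s k) : ℝ) ≤ ((n : ℝ) - k) / 2 := by
  have hedges : ∀ M : (cliqueJoinGraph n s k).Subgraph, M.IsMatching →
      M.edgeSet.ncard ≤ (n - k) / 2 := by
    intro M hM
    have hverts := hM.ncard_verts_le (A := {v : Fin n | n + 1 - s - k ≤ (v : ℕ)})
      (B := {v : Fin n | (v : ℕ) < s})
      fun u hu v huv => cliqueJoinGraph_adj_lt (by omega) hu (M.adj_sub huv)
    rw [hM.ncard_verts_eq_two_mul_ncard_edgeSet, Set.compl_ofPred] at hverts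
    have := Fin.ncard_setOf_val_lt_le n s
    have := Fin.ncard_setOf_val_lt_le n (n + 1 - s - k)
    simp only [not_le] at hverts
    omega
  calc (matchingNumber (cliqueJoinGraph n s k) : ℝ) ≤ ((n - k) / 2 : ℕ) :=
        Nat.cast_le.mpr (matchingNumber_le hedges)
    _ ≤ ((n - k : ℕ) : ℝ) / 2 := Nat.cast_div_le
    _ = ((n : ℝ) - k) / 2 := by rw [Nat.cast_sub (by omega)]

theorem stmt_13 (n s k : ℕ) (hk : 2 ≤ k) (hs : 1 ≤ s) (hmod : n % 2 = k % 2)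
    (hns : 2 * s + k ≤ n) :
    (matchingNumber (cliqueJoinGraph n s k) : ℝ) ≤ ((n : ℝ) - k) / 2 :=
  stmt_13_general n s k hmod hns
end

section
/- Let n, s, k be positive integers with k ≥ 2, s ≥ 1, and n + 1 − 2s − k ≥ 1, and let α be a real number with 0 ≤ α < 1. Then ρ_α(K_s ∨ (K_{n+1−2s−k} ∪ \overline{K_{s+k−1}})) > n − s − k. -/
open scoped Classical

/-! The vertices of index below `m = n + 1 - s - k` span a clique `K_m`, and the vertex `m`
outside it is adjacent to the clique vertex `0`. Whenever a graph has a clique `C` of size `m`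
and a vertex `w ∉ C` adjacent to `C`, the test vector `x = 1_C + t • e_w` satisfies
`xᵀ A_α x ≥ m (m - 1) + 2 (1 - α) t` and `xᵀ x = m + t²`, so by the Rayleigh bound
`ρ_α ≥ xᵀ A_α x / xᵀ x > m - 1` as soon as `0 < t < 2 (1 - α) / (m - 1)`. -/

open Matrix Finset SimpleGraph

section

variable {V : Type*} [Fintype V]

open scoped MatrixOrder in
theorem dotProduct_mulVec_le_maxEigenvalue_mul {M : Matrix V V ℝ}
    (hM : M.IsHermitian) (x : V → ℝ) :
    x ⬝ᵥ (M *ᵥ x) ≤ maxEigenvalue M * (x ⬝ᵥ x) := by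
  have hle : M ≤ algebraMap ℝ _ (maxEigenvalue M) := by
    refine le_algebraMap_of_spectrum_le (fun r hr => le_csSup
      (Module.End.finite_hasEigenvalue _).bddAbove ?_) hM.isSelfAdjoint
    rwa [Set.mem_ofPred_eq, Module.End.hasEigenvalue_iff_mem_spectrum, spectrum_toLin']
  simpa [sub_mulVec, Algebra.algebraMap_eq_smul_one, smul_mulVec] using
    (le_iff.mp hle).dotProduct_mulVec_nonneg x

theorem indicator_dotProduct (C : Finset V) (y : V → ℝ) :
    (fun v => if v ∈ C then 1 else 0) ⬝ᵥ y = ∑ v ∈ C, y v := by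
  simp [dotProduct, ite_mul, sum_ite_mem]

theorem card_sub_one_le_degree_of_isClique {G : SimpleGraph V} {C : Finset V}
    (hC : G.IsClique (C : Set V)) {u : V} (hu : u ∈ C) : #C - 1 ≤ G.degree u := by
  rw [← card_erase_of_mem hu, ← card_neighborFinset_eq_degree]
  exact card_le_card fun v hv => (G.mem_neighborFinset u v).mpr
    (hC hu (mem_of_mem_erase hv) (ne_of_mem_erase hv).symm)

theorem AalphaMatrix_apply (α : ℝ) (G : SimpleGraph V) (u v : V) :
    AalphaMatrix α G u v =
      (if u = v then α * G.degree u else 0) + (if G.Adj u v then 1 - α else 0) := by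
  by_cases h : u = v
  · subst h; simp [AalphaMatrix]
  · simp [AalphaMatrix, h]

theorem isHermitian_AalphaMatrix (α : ℝ) (G : SimpleGraph V) :
    (AalphaMatrix α G).IsHermitian := by
  refine isHermitian_iff_isSymm.mpr (IsSymm.ext fun u v => ?_)
  by_cases h : u = v
  · rw [h]
  · simp only [AalphaMatrix_apply, if_neg h, if_neg (Ne.symm h), G.adj_comm]

theorem AalphaMatrix_nonneg_s17 {α : ℝ} (hα0 : 0 ≤ α) (hα1 : α ≤ 1) (G : SimpleGraph V) (u v : V) :
    0 ≤ AalphaMatrix α G u v := by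
  rw [AalphaMatrix_apply]
  have := sub_nonneg.mpr hα1
  split_ifs <;> positivity

theorem sum_AalphaMatrix_of_isClique (α : ℝ) {G : SimpleGraph V} {C : Finset V}
    (hC : G.IsClique (C : Set V)) {u : V} (hu : u ∈ C) :
    ∑ v ∈ C, AalphaMatrix α G u v = α * G.degree u + (1 - α) * (#C - 1) := by
  have hadj : ∑ v ∈ C, (if G.Adj u v then 1 - α else 0) = (1 - α) * (#C - 1) := by
    rw [← add_sum_erase C _ hu, if_neg (G.irrefl), zero_add,
      sum_congr rfl fun v hv => if_pos (hC hu (mem_of_mem_erase hv) (ne_of_mem_erase hv).symm),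
      sum_const, card_erase_of_mem hu, nsmul_eq_mul, Nat.cast_sub (card_pos.mpr ⟨u, hu⟩)]
    ring
  simp only [AalphaMatrix_apply, sum_add_distrib, sum_ite_eq, if_pos hu, hadj]

theorem sub_one_lt_rhoAlpha_of_isClique {α : ℝ} (hα0 : 0 ≤ α) (hα1 : α < 1)
    {G : SimpleGraph V} {C : Finset V} (hC : G.IsClique (C : Set V)) {c w : V} (hc : c ∈ C)
    (hw : w ∉ C) (hcw : G.Adj c w) : (#C : ℝ) - 1 < rhoAlpha α G := by
  set M := AalphaMatrix α G
  set m : ℝ := ↑(#C) with hm_def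
  have hm : 1 ≤ m := Nat.one_le_cast.mpr (card_pos.mpr ⟨c, hc⟩)
  set t := (1 - α) / m
  have ht : 0 < t := div_pos (sub_pos.mpr hα1) (by linarith)
  have hM := AalphaMatrix_nonneg_s17 hα0 hα1.le G
  have hMcw : M c w = 1 - α := by simp [M, AalphaMatrix_apply, hcw, G.ne_of_adj hcw]
  set a : V → ℝ := fun v => if v ∈ C then 1 else 0
  set b : V → ℝ := Pi.single w t
  have haa : m * (m - 1) ≤ a ⬝ᵥ (M *ᵥ a) := by
    have hrow : ∀ u ∈ C, m - 1 ≤ (M *ᵥ a) u := fun u hu => by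
      have hdeg : m ≤ G.degree u + 1 := by
        rw [hm_def]
        exact_mod_cast Nat.sub_le_iff_le_add.mp (card_sub_one_le_degree_of_isClique hC hu)
      rw [mulVec, dotProduct_comm, indicator_dotProduct, sum_AalphaMatrix_of_isClique α hC hu]
      nlinarith
    calc m * (m - 1) = ∑ _u ∈ C, (m - 1) := by rw [sum_const, nsmul_eq_mul]
      _ ≤ a ⬝ᵥ (M *ᵥ a) := by rw [indicator_dotProduct]; exact sum_le_sum hrow
  have hMb : ∀ u, (M *ᵥ b) u = M u w * t := fun u => dotProduct_single _ _ _
  have hab : (1 - α) * t ≤ a ⬝ᵥ (M *ᵥ b) := by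
    rw [indicator_dotProduct, ← hMcw]
    simp only [hMb]
    exact single_le_sum (fun u _ => mul_nonneg (hM u w) ht.le) hc
  have hba : (1 - α) * t ≤ b ⬝ᵥ (M *ᵥ a) := by
    have hMwc : M w c = 1 - α := by rw [← hMcw]; exact (isHermitian_AalphaMatrix α G).apply c w
    rw [single_dotProduct, mul_comm (1 - α), ← hMwc, mulVec, dotProduct_comm, indicator_dotProduct]
    exact mul_le_mul_of_nonneg_left (single_le_sum (fun v _ => hM w v) hc) ht.le
  have hbb : 0 ≤ b ⬝ᵥ (M *ᵥ b) := by
    rw [single_dotProduct, hMb]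
    exact mul_nonneg ht.le (mul_nonneg (hM w w) ht.le)
  have hnorm : (a + b) ⬝ᵥ (a + b) = m + t ^ 2 := by
    simp only [a, b, dotProduct_add, add_dotProduct, indicator_dotProduct, sum_ite_mem, inter_self,
      sum_const, nsmul_eq_mul, mul_one, single_dotProduct, dotProduct_single, Pi.add_apply,
      Pi.single_eq_same, hw, if_false, mul_zero, add_zero, zero_add, hm_def]
    ring
  have hray : (a + b) ⬝ᵥ (M *ᵥ (a + b)) ≤ rhoAlpha α G * ((a + b) ⬝ᵥ (a + b)) :=
    dotProduct_mulVec_le_maxEigenvalue_mul (isHermitian_AalphaMatrix α G) (a + b)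
  rw [mulVec_add, dotProduct_add, add_dotProduct, add_dotProduct, hnorm] at hray
  have hkey : (m - 1) * (m + t ^ 2) < m * (m - 1) + 2 * ((1 - α) * t) := by
    have : m * t = 1 - α := mul_div_cancel₀ _ (by positivity)
    nlinarith
  exact lt_of_mul_lt_mul_right (by linarith) (by positivity : 0 ≤ m + t ^ 2)

end

theorem stmt_17 (n s k : ℕ) (hk : 2 ≤ k) (hs : 1 ≤ s) (hns : 2 * s + k ≤ n)
    (α : ℝ) (hα0 : 0 ≤ α) (hα1 : α < 1) :
    (n : ℝ) - s - k < rhoAlpha α (cliqueJoinGraph n s k) := by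
  set m := n + 1 - s - k
  have hC : (cliqueJoinGraph n s k).IsClique ({v : Fin n | (v : ℕ) < m} : Finset (Fin n)) :=
    fun u hu v hv huv => ⟨huv, Or.inr (Or.inr ⟨by simpa using hu, by simpa using hv⟩)⟩
  have hcard : #({v : Fin n | (v : ℕ) < m} : Finset (Fin n)) = m := by
    rw [Fin.card_filter_val_lt]; omega
  have key := sub_one_lt_rhoAlpha_of_isClique hα0 hα1 hC (c := ⟨0, by omega⟩) (w := ⟨m, by omega⟩)
    (by simp only [mem_filter, mem_univ, true_and]; omega) (by simp) ⟨by simp [Fin.ext_iff]; omega, Or.inl hs⟩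
  rw [hcard, Nat.cast_sub (by omega), Nat.cast_sub (by omega)] at key
  push_cast at key
  linarith
end

section
/- Let k ≥ 2 and n ≥ 3k−2 be integers and let α be a real number with 0 ≤ α ≤ 1/2. Then [−3(n+k)+4]α² + [6(n+k)−(n−k)−16]α + 6 − 2(n+k) + (n−k) + (1−2α)·√((n−k−2+2αn)² + 4(n²−k²) − 4α(3n+k−2)(n−k)) > 0. -/
set_option maxHeartbeats 1600000

theorem stmt_19 (n k : ℤ) (hk : 2 ≤ k) (hn : 3 * k - 2 ≤ n)
    (α : ℝ) (hα0 : 0 ≤ α) (hα1 : α ≤ 1/2) :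
    0 < (-3*((n : ℝ) + k) + 4) * α^2 + (6*((n : ℝ) + k) - ((n : ℝ) - k) - 16) * α
        + 6 - 2*((n : ℝ) + k) + ((n : ℝ) - k)
        + (1 - 2*α) * Real.sqrt (((n : ℝ) - k - 2 + 2*α*n)^2
            + 4*((n : ℝ)^2 - (k : ℝ)^2)
            - 4*α*(3*(n : ℝ) + k - 2)*((n : ℝ) - k)) := by
  have hk' : (2:ℝ) ≤ (k:ℝ) := by exact_mod_cast hk
  have hn' : 3*(k:ℝ) - 2 ≤ (n:ℝ) := by
    have : ((3 * k - 2 : ℤ) : ℝ) ≤ ((n : ℤ) : ℝ) := by exact_mod_cast hn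
    push_cast at this; linarith
  set N := (n:ℝ) with hN
  set K := (k:ℝ) with hK
  set d : ℝ := (N - K - 2 + 2*α*N)^2 + 4*(N^2 - K^2) - 4*α*(3*N + K - 2)*(N - K) with hd_def
  have hs0 : (0:ℝ) ≤ Real.sqrt d := Real.sqrt_nonneg _
  rcases le_or_gt α (1/3) with h13 | h13
  · -- α ≤ 1/3 case
    set q : ℝ := (-3*(N + K) + 4) * α^2 + (6*(N + K) - (N - K) - 16) * α
        + 6 - 2*(N + K) + (N - K) with hq_def
    rcases le_or_gt q 0 with hq | hq
    · -- need the sqrt term to dominate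
      have hm : (0:ℝ) ≤ N - 3*K + 2 := by linarith
      have hj : (0:ℝ) ≤ K - 2 := by linarith
      have ht : (0:ℝ) ≤ 1/3 - α := by linarith
      have hP1 : (0:ℝ) ≤ 7*α^4 - 18*α^3 + 25*α^2 - 18*α + 4 := by
        nlinarith [mul_nonneg (mul_nonneg ht ht) ht, sq_nonneg (1/3-α), sq_nonneg ((1/3-α)^2), hα0]
      have hP2 : (0:ℝ) ≤ 24*α^4 - 20*α^3 + 32*α^2 - 52*α + 16 := by
        nlinarith [mul_nonneg (mul_nonneg ht ht) ht, sq_nonneg (1/3-α), sq_nonneg ((1/3-α)^2),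
          mul_nonneg (sq_nonneg α) ht, hα0]
      have hP3 : (0:ℝ) ≤ 44*α^4 - 104*α^3 + 152*α^2 - 108*α + 24 := by
        nlinarith [mul_nonneg (mul_nonneg ht ht) ht, sq_nonneg (1/3-α), sq_nonneg ((1/3-α)^2), hα0]
      have hP4 : (0:ℝ) ≤ 160*α^3 - 224*α^2 + 64*α := by
        nlinarith [mul_nonneg (mul_nonneg hα0 (by linarith : (0:ℝ) ≤ 1 - α))
          (by linarith : (0:ℝ) ≤ 2 - 5*α)]
      have hP5 : (0:ℝ) ≤ 48*α^4 + 88*α^3 - 64*α^2 - 72*α + 32 := by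
        nlinarith [mul_nonneg (mul_nonneg ht ht) ht, sq_nonneg (1/3-α), sq_nonneg ((1/3-α)^2),
          mul_nonneg hα0 (mul_nonneg ht (by linarith : (0:ℝ) ≤ 1/3 + α)), hα0]
      have hP6 : (0:ℝ) < 60*α^4 - 136*α^3 + 204*α^2 - 144*α + 32 := by
        nlinarith [mul_nonneg (mul_nonneg ht ht) ht, sq_nonneg (1/3-α), sq_nonneg ((1/3-α)^2), hα0]
      have hE : q^2 < (1-2*α)^2 * d := by
        rw [hq_def, hd_def]
        linarith [mul_nonneg (mul_nonneg hm hm) hP1, mul_nonneg (mul_nonneg hm hj) hP2,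
          mul_nonneg hm hP3, mul_nonneg (mul_nonneg hj hj) hP4, mul_nonneg hj hP5, hP6]
      have hd0 : (0:ℝ) < d := by
        by_contra h
        push_neg at h
        have := mul_nonpos_of_nonneg_of_nonpos (sq_nonneg (1-2*α)) h
        nlinarith [sq_nonneg q]
      have hkey : -q < (1-2*α) * Real.sqrt d := by
        have h2 : (-q)^2 < ((1-2*α) * Real.sqrt d)^2 := by
          rw [mul_pow, Real.sq_sqrt hd0.le]; linear_combination hE
        exact lt_of_pow_lt_pow_left₀ 2 (mul_nonneg (by linarith) hs0) h2
      linarith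
    · have h1 : (0:ℝ) ≤ (1-2*α) * Real.sqrt d := mul_nonneg (by linarith) hs0
      linarith
  · -- 1/3 < α ≤ 1/2: the polynomial part is already positive
    have h1 : (0:ℝ) ≤ (1-2*α) * Real.sqrt d := mul_nonneg (by linarith) hs0
    have hqpos : (0:ℝ) < (-3*(N + K) + 4) * α^2 + (6*(N + K) - (N - K) - 16) * α
        + 6 - 2*(N + K) + (N - K) := by
      nlinarith [mul_nonneg (mul_nonneg (by linarith : (0:ℝ) ≤ α - 1/3)
          (by linarith : (0:ℝ) ≤ 1/2 - α)) (by linarith : (0:ℝ) ≤ 3*(N+K) - 4),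
        mul_nonneg (by linarith : (0:ℝ) ≤ α - 1/3) (by linarith : (0:ℝ) ≤ N - 3*K + 2),
        mul_nonneg (by linarith : (0:ℝ) ≤ α - 1/3) (by linarith : (0:ℝ) ≤ K - 2)]
    linarith
end
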